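/- Let m ≥ 0. For x ∈ ℍᵐ and y ∈ ℍ with star y = −y, set q(x, y) = 1 + xᴴx/2 − y/2 ∈ ℍ. Then q(x, y) ≠ 0, and the Cayley transform 𝒞(x, y) = (√2 · x · q(x,y)⁻¹, (1 − xᴴx/2 + y/2) · q(x,y)⁻¹) (each coordinate of the first entry multiplied on the right by q(x,y)⁻¹) is an injective map from {(x, y) ∈ ℍᵐ × ℍ : star y = −y} into ℍᵐ × ℍ whose image is exactly the punctured unit sphere {(z, w) ∈ ℍᵐ × ℍ : Σᵢ |zᵢ|² + |w|² = 1} \ {(0, −1)}. -/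

import Mathlib

/-!
Write `q = q(x, y)`. Since `1 − xᴴx/2 + y/2 = 2 − q`, the Cayley transform is
`(x, q) ↦ (√2 x q⁻¹, 2q⁻¹ − 1)`, which is inverted on `w ≠ −1` by `q = 2(1 + w)⁻¹`,
`x = z q / √2`. For `q ≠ 0` its value lies on the unit sphere iff
`‖q‖² = 2‖x‖² + ‖2 − q‖²`, i.e. iff `Re q = 1 + ‖x‖²/2`; and this is exactly the condition
for `q = 1 + ‖x‖²/2 − y/2` with `y` purely imaginary, `y` being then determined by `x` and `q`.
-/

open scoped Quaternion

/-- The Cayley transform `𝒞(x, y) = (√2 x q⁻¹, (1 − xᴴx/2 + y/2) q⁻¹)` with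
`q = q(x, y) = 1 + xᴴx/2 − y/2`, defined on pairs `(x, y)` with `y` purely imaginary. -/
noncomputable def cayley (m : ℕ)
    (p : {p : (Fin m → ℍ[ℝ]) × ℍ[ℝ] // star p.2 = -p.2}) :
    (Fin m → ℍ[ℝ]) × ℍ[ℝ] :=
  (fun i => (Real.sqrt 2 : ℝ) • p.1.1 i *
      (1 + (∑ j, star (p.1.1 j) * p.1.1 j) / 2 - p.1.2 / 2)⁻¹,
    (1 - (∑ j, star (p.1.1 j) * p.1.1 j) / 2 + p.1.2 / 2) *
      (1 + (∑ j, star (p.1.1 j) * p.1.1 j) / 2 - p.1.2 / 2)⁻¹)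

namespace Quaternion

instance instCharZero {R : Type*} [CommRing R] [CharZero R] : CharZero ℍ[R] :=
  charZero_of_injective_algebraMap coe_injective

theorem coe_two : ((2 : ℝ) : ℍ[ℝ]) = 2 := rfl

theorem div_two_eq_smul (a : ℍ[ℝ]) : a / 2 = (2⁻¹ : ℝ) • a := by
  rw [div_eq_mul_inv, ← coe_two, ← coe_inv, mul_coe_eq_smul]

theorem sq_norm_coe_sub (r : ℝ) (q : ℍ[ℝ]) :
    ‖(r : ℍ[ℝ]) - q‖ ^ 2 = r ^ 2 - 2 * r * q.re + ‖q‖ ^ 2 := by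
  simp only [sq, ← normSq_eq_norm_mul_self, normSq_def', re_sub, imI_sub, imJ_sub, imK_sub,
    re_coe, imI_coe, imJ_coe, imK_coe]
  ring

theorem sum_star_mul_self {ι : Type*} [Fintype ι] (x : ι → ℍ[ℝ]) :
    ∑ j, star (x j) * x j = ((∑ j, ‖x j‖ ^ 2 : ℝ) : ℍ[ℝ]) := by
  simp only [star_mul_self, sq, normSq_eq_norm_mul_self]
  exact (map_sum (algebraMap ℝ ℍ[ℝ]) _ _).symm

end Quaternion

open Quaternion

section CayleyOfDenom

variable {ι : Type*}

noncomputable def cayleyOfDenom (x : ι → ℍ[ℝ]) (q : ℍ[ℝ]) : (ι → ℍ[ℝ]) × ℍ[ℝ] :=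
  (fun i => Real.sqrt 2 • x i * q⁻¹, 2 * q⁻¹ - 1)

theorem cayleyOfDenom_inj {x x' : ι → ℍ[ℝ]} {q q' : ℍ[ℝ]} (hq : q ≠ 0) :
    cayleyOfDenom x q = cayleyOfDenom x' q' ↔ x = x' ∧ q = q' := by
  refine ⟨fun h => ?_, fun ⟨hx, hq⟩ => hx ▸ hq ▸ rfl⟩
  simp only [cayleyOfDenom, Prod.mk.injEq, sub_left_inj] at h
  obtain ⟨hx, hinv⟩ := h
  obtain rfl : q = q' := inv_injective (mul_left_cancel₀ two_ne_zero hinv)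
  refine ⟨funext fun i => ?_, rfl⟩
  exact smul_right_injective _ (by positivity) (mul_right_cancel₀ (inv_ne_zero hq) (congrFun hx i))

theorem exists_cayleyOfDenom_eq (z : ι → ℍ[ℝ]) {w : ℍ[ℝ]} (hw : w ≠ -1) :
    ∃ x q, q ≠ 0 ∧ cayleyOfDenom x q = (z, w) := by
  have hw' : 1 + w ≠ 0 := fun h => hw (eq_neg_of_add_eq_zero_right h)
  have hq : 2 * (1 + w)⁻¹ ≠ 0 := mul_ne_zero two_ne_zero (inv_ne_zero hw')
  refine ⟨fun i => (Real.sqrt 2)⁻¹ • z i * (2 * (1 + w)⁻¹), 2 * (1 + w)⁻¹, hq, ?_⟩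
  simp only [cayleyOfDenom, Prod.mk.injEq]
  constructor
  · funext i
    rw [smul_mul_assoc, mul_assoc, mul_inv_cancel₀ hq, mul_one, smul_smul,
      mul_inv_cancel₀ (by positivity), one_smul]
  · rw [mul_inv_rev, inv_inv, ← mul_assoc, (Commute.ofNat_left 2 (1 + w)).eq, mul_assoc,
      mul_inv_cancel₀ two_ne_zero, mul_one, add_sub_cancel_left]

theorem cayleyOfDenom_snd_ne_neg_one (x : ι → ℍ[ℝ]) {q : ℍ[ℝ]} (hq : q ≠ 0) :
    (cayleyOfDenom x q).2 ≠ -1 := by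
  simpa [cayleyOfDenom] using hq

variable [Fintype ι]

theorem cayleyOfDenom_mem_sphere_iff (x : ι → ℍ[ℝ]) {q : ℍ[ℝ]} (hq : q ≠ 0) :
    (∑ i, ‖(cayleyOfDenom x q).1 i‖ ^ 2) + ‖(cayleyOfDenom x q).2‖ ^ 2 = 1 ↔
      q.re = 1 + (∑ i, ‖x i‖ ^ 2) / 2 := by
  have hq2 : ‖q‖ ^ 2 ≠ 0 := by positivity
  have hfst (i : ι) : ‖(cayleyOfDenom x q).1 i‖ ^ 2 = 2 * ‖x i‖ ^ 2 / ‖q‖ ^ 2 := by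
    rw [cayleyOfDenom, norm_mul, norm_smul, norm_inv, mul_pow, mul_pow,
      Real.norm_of_nonneg (Real.sqrt_nonneg 2), Real.sq_sqrt zero_le_two, inv_pow, div_eq_mul_inv]
  have hsnd : ‖(cayleyOfDenom x q).2‖ ^ 2 = (4 - 4 * q.re + ‖q‖ ^ 2) / ‖q‖ ^ 2 := by
    rw [cayleyOfDenom, ← div_eq_mul_inv, div_sub_one hq, norm_div, div_pow, ← coe_two,
      sq_norm_coe_sub]
    ring
  simp only [hfst, hsnd, ← Finset.sum_div, ← Finset.mul_sum, ← add_div, div_eq_one_iff_eq hq2]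
  constructor <;> intro h <;> linarith

theorem ne_neg_one_of_sum_sq_norm_add_sq_norm_eq_one {z : ι → ℍ[ℝ]} {w : ℍ[ℝ]}
    (h : (∑ i, ‖z i‖ ^ 2) + ‖w‖ ^ 2 = 1) (hzw : (z, w) ≠ (0, -1)) : w ≠ -1 := by
  rintro rfl
  refine hzw (Prod.ext (funext fun i => ?_) rfl)
  simp only [norm_neg, norm_one, one_pow, add_eq_right] at h
  simpa using (Finset.sum_eq_zero_iff_of_nonneg fun i _ => sq_nonneg ‖z i‖).mp h i
    (Finset.mem_univ i)

end CayleyOfDenom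

section CayleyDenom

variable {ι : Type*} [Fintype ι]

noncomputable def cayleyDenom (x : ι → ℍ[ℝ]) (y : ℍ[ℝ]) : ℍ[ℝ] :=
  1 + (∑ j, star (x j) * x j) / 2 - y / 2

theorem cayleyDenom_eq (x : ι → ℍ[ℝ]) (y : ℍ[ℝ]) :
    cayleyDenom x y = ((1 + (∑ j, ‖x j‖ ^ 2) / 2 : ℝ) : ℍ[ℝ]) - (2⁻¹ : ℝ) • y := by
  rw [cayleyDenom, sum_star_mul_self, div_two_eq_smul, div_two_eq_smul, ← coe_smul, coe_add,
    coe_one, smul_eq_mul, div_eq_inv_mul]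

theorem re_cayleyDenom (x : ι → ℍ[ℝ]) (y : ℍ[ℝ]) :
    (cayleyDenom x y).re = 1 + (∑ j, ‖x j‖ ^ 2) / 2 - y.re / 2 := by
  rw [cayleyDenom_eq, re_sub, re_coe, re_smul, smul_eq_mul, inv_mul_eq_div]

theorem cayleyDenom_ne_zero (x : ι → ℍ[ℝ]) {y : ℍ[ℝ]} (hy : y.re = 0) :
    cayleyDenom x y ≠ 0 := by
  intro h
  have hre := re_cayleyDenom x y
  rw [h, hy, re_zero] at hre
  nlinarith [Finset.sum_nonneg fun j (_ : j ∈ Finset.univ) => sq_nonneg ‖x j‖]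

theorem cayleyDenom_injective (x : ι → ℍ[ℝ]) : Function.Injective (cayleyDenom x) := by
  intro y y' h
  rw [cayleyDenom_eq, cayleyDenom_eq, sub_right_inj] at h
  exact smul_right_injective _ (by norm_num) h

theorem exists_cayleyDenom_eq {x : ι → ℍ[ℝ]} {q : ℍ[ℝ]}
    (hq : q.re = 1 + (∑ j, ‖x j‖ ^ 2) / 2) : ∃ y, y.re = 0 ∧ cayleyDenom x y = q :=
  ⟨(2 : ℝ) • (((1 + (∑ j, ‖x j‖ ^ 2) / 2 : ℝ) : ℍ[ℝ]) - q),
    by rw [re_smul, re_sub, re_coe, hq, sub_self, smul_zero],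
    by rw [cayleyDenom_eq, smul_smul]; norm_num⟩

end CayleyDenom

theorem cayley_mk {m : ℕ} (x : Fin m → ℍ[ℝ]) (y : ℍ[ℝ]) (hy : star y = -y) :
    cayley m ⟨(x, y), hy⟩ = cayleyOfDenom x (cayleyDenom x y) := by
  have hq := cayleyDenom_ne_zero x (star_eq_neg.mp hy)
  have hnum : 1 - (∑ j, star (x j) * x j) / 2 + y / 2 = 2 - cayleyDenom x y := by
    rw [cayleyDenom]
    generalize (∑ j, star (x j) * x j) / 2 = a
    generalize y / 2 = b
    rw [← one_add_one_eq_two]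
    abel
  rw [cayleyOfDenom, ← div_eq_mul_inv 2, div_sub_one hq, div_eq_mul_inv, ← hnum]
  rfl

/-- Section 1.1 (Bruhat decomposition): `q(x, y) = 1 + xᴴx/2 − y/2` never vanishes,
and the Cayley transform is an injection of the quaternionic Heisenberg group
`{(x, y) : star y = −y}` onto the unit sphere of `ℍᵐ × ℍ` minus the point `(0, −1)`. -/
theorem stmt7 (m : ℕ) :
    (∀ x : Fin m → ℍ[ℝ], ∀ y : ℍ[ℝ], star y = -y →
        1 + (∑ j, star (x j) * x j) / 2 - y / 2 ≠ 0) ∧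
    Function.Injective (cayley m) ∧
    Set.range (cayley m) =
      {q : (Fin m → ℍ[ℝ]) × ℍ[ℝ] | (∑ i, ‖q.1 i‖ ^ 2) + ‖q.2‖ ^ 2 = 1} \
        {((0 : Fin m → ℍ[ℝ]), (-1 : ℍ[ℝ]))} := by
  refine ⟨fun x y hy => cayleyDenom_ne_zero x (star_eq_neg.mp hy), ?_, ?_⟩
  · rintro ⟨⟨x, y⟩, hy⟩ ⟨⟨x', y'⟩, hy'⟩ h
    rw [cayley_mk, cayley_mk, cayleyOfDenom_inj (cayleyDenom_ne_zero x (star_eq_neg.mp hy))] at h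
    obtain ⟨rfl, hq⟩ := h
    cases cayleyDenom_injective x hq
    rfl
  · ext zw
    simp only [Set.mem_range, Set.mem_sdiff, Set.mem_ofPred_eq, Set.mem_singleton_iff]
    constructor
    · rintro ⟨⟨⟨x, y⟩, hy⟩, rfl⟩
      have hq := cayleyDenom_ne_zero x (star_eq_neg.mp hy)
      rw [cayley_mk]
      refine ⟨(cayleyOfDenom_mem_sphere_iff x hq).2 ?_,
        fun h => cayleyOfDenom_snd_ne_neg_one x hq (congrArg Prod.snd h)⟩
      rw [re_cayleyDenom, star_eq_neg.mp hy, zero_div, sub_zero]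
    · obtain ⟨z, w⟩ := zw
      rintro ⟨hsphere, hpole⟩
      obtain ⟨x, q, hq, hxq⟩ :=
        exists_cayleyOfDenom_eq z (ne_neg_one_of_sum_sq_norm_add_sq_norm_eq_one hsphere hpole)
      obtain ⟨y, hy, rfl⟩ :=
        exists_cayleyDenom_eq ((cayleyOfDenom_mem_sphere_iff x hq).1 (hxq ▸ hsphere))
      exact ⟨⟨(x, y), star_eq_neg.mpr hy⟩, (cayley_mk _ _ _).trans hxq⟩
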